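/- Let U be a vector space and let (U,·) and (U*,·) be left symmetric algebras. Extend the products to Φ(U) = U ⊕ U* by (X+α)·(Y+β) = X·Y − L_α^t Y − L_X^t β + α·β. Define ρ(X,α) = [L_X, L_α^t] + L_{L_α^t X} + (L_{L_X^t α})^t ∈ End(U). Then the extended product on Φ(U) is left symmetric if and only if ρ(X,α) = 0 for all X ∈ U and α ∈ U*. -/

import Mathlib

/-!
Paired with linear forms, each component of the left symmetry defect `ass(p,q,r) − ass(q,p,r)`
of `Φ(U)` at `p = X+α`, `q = Y+β`, `r = Z+γ` is a signed sum of the defects of `U` and `U*` and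
of `ρ(X,β)`, `ρ(Y,α)`. When `U` and `U*` are left symmetric only the `ρ` terms survive, and
`p = X`, `q = α`, `r = Z` isolates `ρ(X,α) Z`.
-/

variable {k U : Type*} [Field k] [AddCommGroup U] [Module k U] [FiniteDimensional k U]

/-- The transpose `U → U` of an endomorphism of the dual space, using the canonical
identification `U ≅ U**`. -/
noncomputable def dualTranspose (f : Module.Dual k U →ₗ[k] Module.Dual k U) : U →ₗ[k] U :=
  (Module.evalEquiv k U).symm.toLinearMap ∘ₗ f.dualMap ∘ₗ (Module.evalEquiv k U).toLinearMap

/-- The extended product `(X+α)·(Y+β) = X·Y − L_α^t Y − L_X^t β + α·β` on `Φ(U)`. -/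
noncomputable def extProd (mul : U →ₗ[k] U →ₗ[k] U)
    (mulD : Module.Dual k U →ₗ[k] Module.Dual k U →ₗ[k] Module.Dual k U)
    (p q : U × Module.Dual k U) : U × Module.Dual k U :=
  (mul p.1 q.1 - dualTranspose (mulD p.2) q.1,
   - (mul p.1).dualMap q.2 + mulD p.2 q.2)

/-- `ρ(X,α) = [L_X, L_α^t] + L_{L_α^t X} + (L_{L_X^t α})^t`. -/
noncomputable def rhoOp (mul : U →ₗ[k] U →ₗ[k] U)
    (mulD : Module.Dual k U →ₗ[k] Module.Dual k U →ₗ[k] Module.Dual k U)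
    (X : U) (α : Module.Dual k U) : U →ₗ[k] U :=
  mul X ∘ₗ dualTranspose (mulD α) - dualTranspose (mulD α) ∘ₗ mul X
    + mul (dualTranspose (mulD α) X)
    + dualTranspose (mulD ((mul X).dualMap α))

def leftSymmDefect {A : Type*} [Sub A] (m : A → A → A) (a b c : A) : A :=
  (m (m a b) c - m a (m b c)) - (m (m b a) c - m b (m a c))

lemma leftSymmDefect_eq_zero_iff {A : Type*} [AddGroup A] (m : A → A → A) (a b c : A) :
    leftSymmDefect m a b c = 0 ↔ m (m a b) c - m a (m b c) = m (m b a) c - m b (m a c) :=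
  sub_eq_zero

@[simp] lemma apply_dualTranspose (f : Module.Dual k U →ₗ[k] Module.Dual k U)
    (φ : Module.Dual k U) (y : U) : φ (dualTranspose f y) = f φ y := by
  simp [dualTranspose, Module.apply_evalEquiv_symm_apply]

lemma apply_apply_dualTranspose (f : U →ₗ[k] U) (g : Module.Dual k U →ₗ[k] Module.Dual k U)
    (φ : Module.Dual k U) (y : U) : φ (f (dualTranspose g y)) = g (f.dualMap φ) y :=
  apply_dualTranspose g (f.dualMap φ) y

section Defect

variable (mul : U →ₗ[k] U →ₗ[k] U)
  (mulD : Module.Dual k U →ₗ[k] Module.Dual k U →ₗ[k] Module.Dual k U)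

lemma apply_fst_leftSymmDefect_extProd (p q r : U × Module.Dual k U) (φ : Module.Dual k U) :
    φ (leftSymmDefect (extProd mul mulD) p q r).1 =
      φ (leftSymmDefect (mul · ·) p.1 q.1 r.1) - leftSymmDefect (mulD · ·) p.2 q.2 φ r.1
        + φ (rhoOp mul mulD p.1 q.2 r.1) - φ (rhoOp mul mulD q.1 p.2 r.1) := by
  simp only [leftSymmDefect, extProd, rhoOp, Prod.fst_sub, map_sub, map_add, map_neg,
    apply_dualTranspose, LinearMap.sub_apply, LinearMap.add_apply, LinearMap.neg_apply,
    LinearMap.comp_apply]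
  ring

lemma snd_leftSymmDefect_extProd_apply (p q r : U × Module.Dual k U) (w : U) :
    (leftSymmDefect (extProd mul mulD) p q r).2 w =
      leftSymmDefect (mulD · ·) p.2 q.2 r.2 w - r.2 (leftSymmDefect (mul · ·) p.1 q.1 w)
        - r.2 (rhoOp mul mulD p.1 q.2 w) + r.2 (rhoOp mul mulD q.1 p.2 w) := by
  simp only [leftSymmDefect, extProd, rhoOp, Prod.snd_sub, map_sub, map_add, map_neg,
    apply_dualTranspose, apply_apply_dualTranspose, LinearMap.sub_apply, LinearMap.add_apply,
    LinearMap.neg_apply, LinearMap.dualMap_apply, LinearMap.comp_apply]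
  ring

end Defect

/-- Given left symmetric products on `U` and `U*`, the extended product on `Φ(U)` is
left symmetric if and only if `ρ(X,α) = 0` for all `X ∈ U`, `α ∈ U*`. -/
theorem extProd_leftSymmetric_iff_rho_eq_zero
    (mul : U →ₗ[k] U →ₗ[k] U)
    (mulD : Module.Dual k U →ₗ[k] Module.Dual k U →ₗ[k] Module.Dual k U)
    (hls : ∀ u v w : U,
      mul (mul u v) w - mul u (mul v w) = mul (mul v u) w - mul v (mul u w))
    (hlsD : ∀ α β γ : Module.Dual k U,
      mulD (mulD α β) γ - mulD α (mulD β γ) = mulD (mulD β α) γ - mulD β (mulD α γ)) :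
    (∀ p q r : U × Module.Dual k U,
      extProd mul mulD (extProd mul mulD p q) r - extProd mul mulD p (extProd mul mulD q r)
        = extProd mul mulD (extProd mul mulD q p) r -
            extProd mul mulD q (extProd mul mulD p r)) ↔
    (∀ (X : U) (α : Module.Dual k U), rhoOp mul mulD X α = 0) := by
  have hU (u v w : U) : leftSymmDefect (mul · ·) u v w = 0 :=
    (leftSymmDefect_eq_zero_iff _ u v w).2 (hls u v w)
  have hD (α β γ : Module.Dual k U) : leftSymmDefect (mulD · ·) α β γ = 0 :=
    (leftSymmDefect_eq_zero_iff _ α β γ).2 (hlsD α β γ)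
  simp only [← leftSymmDefect_eq_zero_iff]
  constructor
  · intro h X α
    ext Z
    refine (Module.forall_dual_apply_eq_zero_iff k _).1 fun φ => ?_
    simpa [h, hU, hD, rhoOp] using
      (apply_fst_leftSymmDefect_extProd mul mulD (X, 0) (0, α) (Z, 0) φ).symm
  · intro h p q r
    ext w
    · refine (Module.forall_dual_apply_eq_zero_iff k _).1 fun φ => ?_
      simp [apply_fst_leftSymmDefect_extProd, hU, hD, h]
    · simp [snd_leftSymmDefect_extProd_apply, hU, hD, h]
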